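/- arXiv:2605.01481 — 3 statements merged into one kernel-verified Lean document; each statement's English description precedes it below -/
import Mathlib

section
/- Every optimal solution of the relaxed program (FRP) is feasible for the full program (P); that is, if x maximizes Σ w_{ij} x_{ij} subject to transitivity constraints x_{ij}+x_{jk} ≤ 1+x_{ik} imposed only for triples with w_{ij}+w_{jk} ≥ 0, then x satisfies x_{ij}+x_{jk} ≤ 1+x_{ik} for all triples of distinct vertices. -/
open Finset
open scoped Classical

/-- Objective value `∑_{{i,j} ∈ E} w_{ij} x_{ij}`. -/
noncomputable def objVal {V : Type*} [Fintype V] [DecidableEq V]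
    (w x : Sym2 V → ℝ) : ℝ :=
  ∑ e ∈ Finset.univ.filter (fun e : Sym2 V => ¬ e.IsDiag), w e * x e

/-- Feasibility for (FRP): `x` is 0-1 and satisfies the transitivity constraints
for all triples of distinct vertices with `w_{ij} + w_{jk} ≥ 0`. -/
def FeasFRP {V : Type*} (w x : Sym2 V → ℝ) : Prop :=
  (∀ e : Sym2 V, x e = 0 ∨ x e = 1) ∧
  ∀ i j k : V, i ≠ j → j ≠ k → i ≠ k →
    0 ≤ w s(i, j) + w s(j, k) →
    x s(i, j) + x s(j, k) ≤ 1 + x s(i, k)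

namespace FrpAux

variable {V : Type*} [Fintype V] [DecidableEq V]

/-- Whether both endpoints of an edge are on the same side of the vertex
predicate `p`. -/
def SameSide (p : V → Prop) (e : Sym2 V) : Prop :=
  (∀ u ∈ e, p u) ∨ (∀ u ∈ e, ¬ p u)

lemma sameSide_mk (p : V → Prop) (a b : V) :
    SameSide p s(a, b) ↔ ((p a ∧ p b) ∨ (¬ p a ∧ ¬ p b)) := by
  unfold SameSide
  simp [Sym2.mem_iff, forall_eq_or_imp, forall_eq]

/-- The solution obtained from `x` by zeroing all edges crossing the cut
defined by `p`. -/
noncomputable def cutSol (x : Sym2 V → ℝ) (p : V → Prop) : Sym2 V → ℝ :=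
  fun e => if SameSide p e then x e else 0

lemma cutSol_feas (w x : Sym2 V → ℝ) (p : V → Prop) (h : FeasFRP w x) :
    FeasFRP w (cutSol x p) := by
  obtain ⟨h01, hc⟩ := h
  have hy01 : ∀ e, cutSol x p e = 0 ∨ cutSol x p e = 1 := by
    intro e
    unfold cutSol
    split
    · exact h01 e
    · exact Or.inl rfl
  have hnn : ∀ e, 0 ≤ cutSol x p e := by
    intro e; rcases hy01 e with h | h <;> rw [h] <;> norm_num
  have hle1 : ∀ e, cutSol x p e ≤ 1 := by
    intro e; rcases hy01 e with h | h <;> rw [h] <;> norm_num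
  refine ⟨hy01, ?_⟩
  intro i j k hij hjk hik hw
  by_cases c1 : SameSide p s(i, j)
  · by_cases c2 : SameSide p s(j, k)
    · have c3 : SameSide p s(i, k) := by
        rw [sameSide_mk] at c1 c2 ⊢
        tauto
      have hx := hc i j k hij hjk hik hw
      unfold cutSol
      rw [if_pos c1, if_pos c2, if_pos c3]
      exact hx
    · have : cutSol x p s(j, k) = 0 := by unfold cutSol; rw [if_neg c2]
      have h1 := hle1 s(i, j)
      have h2 := hnn s(i, k)
      rw [this]
      linarith
  · have : cutSol x p s(i, j) = 0 := by unfold cutSol; rw [if_neg c1]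
    have h1 := hle1 s(j, k)
    have h2 := hnn s(i, k)
    rw [this]
    linarith

lemma cutSol_obj (w x : Sym2 V → ℝ) (p : V → Prop) :
    objVal w (cutSol x p)
      = objVal w x -
        ∑ e ∈ Finset.univ.filter
            (fun e : Sym2 V => ¬ e.IsDiag ∧ ¬ SameSide p e), w e * x e := by
  have hsplit :
      (∑ e ∈ Finset.univ.filter
          (fun e : Sym2 V => ¬ e.IsDiag ∧ SameSide p e), w e * x e)
        + (∑ e ∈ Finset.univ.filter
          (fun e : Sym2 V => ¬ e.IsDiag ∧ ¬ SameSide p e), w e * x e)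
      = objVal w x := by
    unfold objVal
    rw [← Finset.filter_filter, ← Finset.filter_filter]
    exact Finset.sum_filter_add_sum_filter_not _ _ _
  have hobj : objVal w (cutSol x p)
      = ∑ e ∈ Finset.univ.filter
          (fun e : Sym2 V => ¬ e.IsDiag ∧ SameSide p e), w e * x e := by
    unfold objVal cutSol
    rw [← Finset.filter_filter]
    conv_rhs => rw [Finset.sum_filter]
    refine Finset.sum_congr rfl fun e _ => ?_
    by_cases hs : SameSide p e
    · rw [if_pos hs, if_pos hs]
    · rw [if_neg hs, if_neg hs, mul_zero]
  rw [hobj]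
  linarith

/-- Closed neighborhood predicate of a vertex `v` w.r.t. the 0-1 solution `x`. -/
def Nbhd (x : Sym2 V → ℝ) (v : V) : V → Prop :=
  fun u => u = v ∨ x s(v, u) = 1

end FrpAux

open FrpAux in
/-- Every optimal solution of (FRP) satisfies all transitivity constraints, i.e.,
is feasible for the full program (P). -/
theorem frp_optimal_is_p_feasible
    {V : Type*} [Fintype V] [DecidableEq V]
    (w : Sym2 V → ℝ) (x : Sym2 V → ℝ)
    (hfeas : FeasFRP w x)
    (hopt : ∀ y : Sym2 V → ℝ, FeasFRP w y → objVal w y ≤ objVal w x) :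
    ∀ i j k : V, i ≠ j → j ≠ k → i ≠ k →
      x s(i, j) + x s(j, k) ≤ 1 + x s(i, k) := by
  by_contra hcon
  push_neg at hcon
  obtain ⟨i, j, k, hij, hjk, hik, hlt⟩ := hcon
  obtain ⟨h01, hc⟩ := hfeas
  have hkey : x s(i, j) = 1 ∧ x s(j, k) = 1 ∧ x s(i, k) = 0 := by
    rcases h01 s(i, j) with h1 | h1 <;> rcases h01 s(j, k) with h2 | h2 <;>
      rcases h01 s(i, k) with h3 | h3 <;>
      first
        | (exact ⟨h1, h2, h3⟩)
        | (exfalso; rw [h1, h2, h3] at hlt; linarith)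
  obtain ⟨hx1, hx2, hx3⟩ := hkey
  -- every cut has nonnegative weight
  have hcut : ∀ p : V → Prop,
      0 ≤ ∑ e ∈ Finset.univ.filter
          (fun e : Sym2 V => ¬ e.IsDiag ∧ ¬ SameSide p e), w e * x e := by
    intro p
    have h1 := hopt (cutSol x p) (cutSol_feas w x p ⟨h01, hc⟩)
    rw [cutSol_obj w x p] at h1
    linarith
  -- per-vertex cut as a sum over ordered pairs
  have hv : ∀ v : V,
      (∑ e ∈ Finset.univ.filter
          (fun e : Sym2 V => ¬ e.IsDiag ∧ ¬ SameSide (Nbhd x v) e), w e * x e)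
      = ∑ q ∈ (Finset.univ : Finset (V × V)).filter
            (fun q => Nbhd x v q.1 ∧ ¬ Nbhd x v q.2),
          w s(q.1, q.2) * x s(q.1, q.2) := by
    intro v
    refine (Finset.sum_bij (fun q _ => s(q.1, q.2)) ?_ ?_ ?_ ?_).symm
    · rintro ⟨a, b⟩ hq
      rw [Finset.mem_filter] at hq ⊢
      obtain ⟨-, hpa, hpb⟩ := hq
      have hab : a ≠ b := fun h => hpb (h ▸ hpa)
      refine ⟨Finset.mem_univ _, ?_, ?_⟩
      · rw [Sym2.mk_isDiag_iff]; exact hab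
      · rw [sameSide_mk]
        exact fun hcase => hcase.elim (fun h => hpb h.2) (fun h => h.1 hpa)
    · rintro ⟨a₁, b₁⟩ h₁ ⟨a₂, b₂⟩ h₂ heq
      rw [Finset.mem_filter] at h₁ h₂
      simp only [Sym2.eq_iff] at heq
      rcases heq with ⟨rfl, rfl⟩ | ⟨rfl, rfl⟩
      · rfl
      · exact absurd h₁.2.1 h₂.2.2
    · intro e he
      induction e using Sym2.ind with
      | _ a b =>
        rw [Finset.mem_filter] at he
        obtain ⟨-, hnd, hns⟩ := he
        rw [sameSide_mk] at hns
        by_cases hpa : Nbhd x v a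
        · have hpb : ¬ Nbhd x v b := fun hpb => hns (Or.inl ⟨hpa, hpb⟩)
          refine ⟨(a, b), ?_, rfl⟩
          rw [Finset.mem_filter]
          exact ⟨Finset.mem_univ _, hpa, hpb⟩
        · have hpb : Nbhd x v b := by
            by_contra hpb
            exact hns (Or.inr ⟨hpa, hpb⟩)
          refine ⟨(b, a), ?_, Sym2.eq_swap⟩
          rw [Finset.mem_filter]
          exact ⟨Finset.mem_univ _, hpb, hpa⟩
    · rintro ⟨a, b⟩ -
      rfl
  -- the set of ordered violated triples
  set T : Finset (V × V × V) :=
    (Finset.univ : Finset (V × V × V)).filter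
      (fun t => t.1 ≠ t.2.1 ∧ t.2.1 ≠ t.2.2 ∧ t.1 ≠ t.2.2 ∧
        x s(t.1, t.2.1) = 1 ∧ x s(t.2.1, t.2.2) = 1 ∧ x s(t.1, t.2.2) = 0)
    with hT
  set U : Finset (V × V × V) :=
    (Finset.univ : Finset (V × V × V)).filter
      (fun t => Nbhd x t.1 t.2.1 ∧ ¬ Nbhd x t.1 t.2.2) with hU
  -- total of all neighborhood cuts equals the sum over U
  have htot :
      (∑ v : V, ∑ q ∈ (Finset.univ : Finset (V × V)).filter
            (fun q => Nbhd x v q.1 ∧ ¬ Nbhd x v q.2),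
          w s(q.1, q.2) * x s(q.1, q.2))
      = ∑ t ∈ U, w s(t.2.1, t.2.2) * x s(t.2.1, t.2.2) := by
    rw [hU]
    have h1 : ∀ v : V,
        (∑ q ∈ (Finset.univ : Finset (V × V)).filter
            (fun q => Nbhd x v q.1 ∧ ¬ Nbhd x v q.2),
          w s(q.1, q.2) * x s(q.1, q.2))
        = ∑ q ∈ (Finset.univ : Finset (V × V)),
            (if Nbhd x v q.1 ∧ ¬ Nbhd x v q.2 then
              w s(q.1, q.2) * x s(q.1, q.2) else 0) := by
      intro v; rw [Finset.sum_filter]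
    simp only [h1]
    conv_rhs => rw [Finset.sum_filter, ← Finset.univ_product_univ,
      Finset.sum_product]
  -- sum over U equals sum over T
  have hUT : (∑ t ∈ U, w s(t.2.1, t.2.2) * x s(t.2.1, t.2.2))
      = ∑ t ∈ T, w s(t.2.1, t.2.2) * x s(t.2.1, t.2.2) := by
    refine (Finset.sum_subset ?_ ?_).symm
    · intro t ht
      rw [hT, Finset.mem_filter] at ht
      rw [hU, Finset.mem_filter]
      obtain ⟨-, hva, hab, hvb, hxva, hxab, hxvb⟩ := ht
      refine ⟨Finset.mem_univ _, Or.inr hxva, ?_⟩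
      rintro (h | h)
      · exact hvb h.symm
      · rw [h] at hxvb; norm_num at hxvb
    · intro t htU htT
      rw [hU, Finset.mem_filter] at htU
      obtain ⟨-, hpa, hpb⟩ := htU
      by_cases hva : t.1 = t.2.1
      · have : x s(t.2.1, t.2.2) = 0 := by
          rcases h01 s(t.2.1, t.2.2) with h | h
          · exact h
          · exfalso; exact hpb (Or.inr (hva ▸ h))
        rw [this, mul_zero]
      · have hxva : x s(t.1, t.2.1) = 1 := by
          rcases hpa with h | h
          · exact absurd h.symm hva
          · exact h
        by_cases hxab : x s(t.2.1, t.2.2) = 1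
        · exfalso
          apply htT
          rw [hT, Finset.mem_filter]
          have hvb : t.1 ≠ t.2.2 := fun h => hpb (Or.inl h.symm)
          have hxvb : x s(t.1, t.2.2) = 0 := by
            rcases h01 s(t.1, t.2.2) with h | h
            · exact h
            · exact absurd (Or.inr h) hpb
          have hab : t.2.1 ≠ t.2.2 := fun h => hpb (h ▸ hpa)
          exact ⟨Finset.mem_univ _, hva, hab, hvb, hxva, hxab, hxvb⟩
        · have : x s(t.2.1, t.2.2) = 0 := (h01 _).resolve_right hxab
          rw [this, mul_zero]
  -- the violated triple is in T
  have hT_ne : T.Nonempty := by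
    refine ⟨(i, j, k), ?_⟩
    rw [hT, Finset.mem_filter]
    exact ⟨Finset.mem_univ _, hij, hjk, hik, hx1, hx2, hx3⟩
  -- reindex T by the involution (v,a,b) ↦ (b,a,v)
  have hswap : (∑ t ∈ T, w s(t.2.1, t.2.2) * x s(t.2.1, t.2.2))
      = ∑ t ∈ T, w s(t.1, t.2.1) * x s(t.1, t.2.1) := by
    have hmem : ∀ t ∈ T, ((t.2.2, t.2.1, t.1) : V × V × V) ∈ T := by
      rintro ⟨v, a, b⟩ ht
      rw [hT, Finset.mem_filter] at ht ⊢
      obtain ⟨-, hva, hab, hvb, hxva, hxab, hxvb⟩ := ht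
      refine ⟨Finset.mem_univ _, hab.symm, hva.symm, hvb.symm, ?_, ?_, ?_⟩
      · rw [Sym2.eq_swap]; exact hxab
      · rw [Sym2.eq_swap]; exact hxva
      · rw [Sym2.eq_swap]; exact hxvb
    refine Finset.sum_nbij' (fun t => (t.2.2, t.2.1, t.1))
      (fun t => (t.2.2, t.2.1, t.1)) hmem hmem ?_ ?_ ?_
    · rintro ⟨v, a, b⟩ -; rfl
    · rintro ⟨v, a, b⟩ -; rfl
    · rintro ⟨v, a, b⟩ -
      simp only
      rw [Sym2.eq_swap]
  -- each violated triple contributes a strictly negative pair of weights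
  have hstrict : ∀ t ∈ T,
      (w s(t.2.1, t.2.2) * x s(t.2.1, t.2.2) + w s(t.1, t.2.1) * x s(t.1, t.2.1))
        < 0 := by
    rintro ⟨v, a, b⟩ ht
    rw [hT, Finset.mem_filter] at ht
    obtain ⟨-, hva, hab, hvb, hxva, hxab, hxvb⟩ := ht
    simp only at hxva hxab hxvb ⊢
    rw [hxva, hxab, mul_one, mul_one]
    by_contra hge
    push_neg at hge
    have hwsum : 0 ≤ w s(v, a) + w s(a, b) := by linarith
    have := hc v a b hva hab hvb hwsum
    rw [hxva, hxab, hxvb] at this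
    linarith
  have hTneg : (∑ t ∈ T, w s(t.2.1, t.2.2) * x s(t.2.1, t.2.2)) < 0 := by
    have h2 : (∑ t ∈ T,
        (w s(t.2.1, t.2.2) * x s(t.2.1, t.2.2)
          + w s(t.1, t.2.1) * x s(t.1, t.2.1)))
        < ∑ _t ∈ T, (0 : ℝ) :=
      Finset.sum_lt_sum_of_nonempty hT_ne hstrict
    rw [Finset.sum_const_zero, Finset.sum_add_distrib, ← hswap] at h2
    linarith
  -- but the total of all neighborhood cuts is nonnegative
  have htot_nonneg : 0 ≤ ∑ v : V, ∑ q ∈ (Finset.univ : Finset (V × V)).filter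
        (fun q => Nbhd x v q.1 ∧ ¬ Nbhd x v q.2),
      w s(q.1, q.2) * x s(q.1, q.2) := by
    apply Finset.sum_nonneg
    intro v _
    rw [← hv v]
    exact hcut (Nbhd x v)
  rw [htot, hUT] at htot_nonneg
  linarith
end

section
/- Let x be an optimal solution of (FRP) and let X = { {i,j} : x_{ij} = 1 }. Then for every connected component C of the graph (V,X), with F the edges of X inside C, the weighted graph (C,F,w) satisfies: every cut of (C,F) has nonnegative weight. -/
open Finset
open scoped Classical

/-- Observation 1 (C2): if `x` is an optimal solution of (FRP), `Gx` is the graph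
whose edges are the pairs with `x = 1`, and `(S,T)` is a cut of a connected
component of `Gx` (namely of the component of some vertex `v`), then the weight of
the cut is nonnegative. -/
theorem frp_optimal_component_cuts_nonneg
    {V : Type*} [Fintype V] [DecidableEq V]
    (w : Sym2 V → ℝ) (x : Sym2 V → ℝ)
    (hfeas : FeasFRP w x)
    (hopt : ∀ y : Sym2 V → ℝ, FeasFRP w y → objVal w y ≤ objVal w x)
    (Gx : SimpleGraph V)
    (hGx : ∀ i j : V, Gx.Adj i j ↔ (i ≠ j ∧ x s(i, j) = 1))
    (v : V) (S T : Finset V)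
    (hS : S.Nonempty) (hT : T.Nonempty) (hdisj : Disjoint S T)
    (hcomp : ∀ u : V, u ∈ S ∪ T ↔ Gx.Reachable v u) :
    0 ≤ ∑ i ∈ S, ∑ j ∈ T, if Gx.Adj i j then w s(i, j) else 0 := by
  classical
  obtain ⟨hx01, hxtri⟩ := hfeas
  have hST : ∀ ⦃a⦄, a ∈ S → a ∉ T := fun a ha => Finset.disjoint_left.mp hdisj ha
  -- the cut-crossing predicate
  set cross : Sym2 V → Prop := fun e => ∃ p : V × V, e = s(p.1, p.2) ∧ p.1 ∈ S ∧ p.2 ∈ T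
    with hcrossdef
  have hcross_symm : ∀ i j : V, cross s(i, j) → (i ∈ S ∧ j ∈ T) ∨ (j ∈ S ∧ i ∈ T) := by
    intro i j ⟨p, hp, hp1, hp2⟩
    rcases Sym2.eq_iff.mp hp with ⟨h1, h2⟩ | ⟨h1, h2⟩
    · exact Or.inl ⟨h1 ▸ hp1, h2 ▸ hp2⟩
    · exact Or.inr ⟨h2 ▸ hp1, h1 ▸ hp2⟩
  set y : Sym2 V → ℝ := fun e => if cross e then 0 else x e with hydef
  have hx0le : ∀ e, (0:ℝ) ≤ x e := fun e => by rcases hx01 e with h | h <;> simp [h]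
  have hxle1 : ∀ e, x e ≤ 1 := fun e => by rcases hx01 e with h | h <;> simp [h]
  have hyle : ∀ e, y e ≤ x e := by
    intro e; by_cases h : cross e <;> simp [hydef, h, hx0le e]
  have hyle1 : ∀ e, y e ≤ 1 := fun e => le_trans (hyle e) (hxle1 e)
  -- y is feasible
  have hyfeas : FeasFRP w y := by
    constructor
    · intro e; by_cases h : cross e <;> simp [hydef, h, hx01 e]
    · intro i j k hij hjk hik hw
      by_cases hc : cross s(i, k)
      · -- show not both y_{ij} and y_{jk} are 1
        have key : y s(i, j) = 0 ∨ y s(j, k) = 0 := by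
          by_contra hcon
          push_neg at hcon
          obtain ⟨h1, h2⟩ := hcon
          have hcij : ¬ cross s(i, j) := by
            intro h; simp [hydef, h] at h1
          have hcjk : ¬ cross s(j, k) := by
            intro h; simp [hydef, h] at h2
          have hxij : x s(i, j) = 1 := by
            have := h1; simp [hydef, hcij] at this ⊢
            rcases hx01 s(i,j) with h | h
            · exact absurd h this
            · exact h
          have hxjk : x s(j, k) = 1 := by
            have := h2; simp [hydef, hcjk] at this ⊢
            rcases hx01 s(j,k) with h | h
            · exact absurd h this
            · exact h
          have hadjij : Gx.Adj i j := (hGx i j).mpr ⟨hij, hxij⟩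
          have hadjjk : Gx.Adj j k := (hGx j k).mpr ⟨hjk, hxjk⟩
          -- j is in the component, so in S ∪ T
          rcases hcross_symm i k hc with ⟨hiS, hkT⟩ | ⟨hkS, hiT⟩
          · have hiU : i ∈ S ∪ T := Finset.mem_union_left _ hiS
            have hvj : Gx.Reachable v j := ((hcomp i).mp hiU).trans hadjij.reachable
            have hjU := (hcomp j).mpr hvj
            rcases Finset.mem_union.mp hjU with hjS | hjT
            · exact hcjk ⟨(j, k), rfl, hjS, hkT⟩
            · exact hcij ⟨(i, j), rfl, hiS, hjT⟩
          · have hiU : i ∈ S ∪ T := Finset.mem_union_right _ hiT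
            have hvj : Gx.Reachable v j := ((hcomp i).mp hiU).trans hadjij.reachable
            have hjU := (hcomp j).mpr hvj
            rcases Finset.mem_union.mp hjU with hjS | hjT
            · exact hcij ⟨(j, i), Sym2.eq_swap, hjS, hiT⟩
            · exact hcjk ⟨(k, j), Sym2.eq_swap, hkS, hjT⟩
        have hy0 : (0:ℝ) ≤ y s(i, k) := by
          by_cases h : cross s(i,k) <;> simp [hydef, h, hx0le]
        rcases key with h | h
        · rw [h]; linarith [hyle1 s(j,k)]
        · rw [h]; linarith [hyle1 s(i,j)]
      · have : y s(i, k) = x s(i, k) := by simp [hydef, hc]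
        rw [this]
        calc y s(i, j) + y s(j, k) ≤ x s(i, j) + x s(j, k) := by
              linarith [hyle s(i,j), hyle s(j,k)]
          _ ≤ 1 + x s(i, k) := hxtri i j k hij hjk hik hw
  have hobj := hopt y hyfeas
  -- compute the objective difference
  have hdiff : objVal w x - objVal w y
      = ∑ e ∈ Finset.univ.filter cross, w e * x e := by
    unfold objVal
    rw [← Finset.sum_sub_distrib]
    have h1 : ∀ e ∈ Finset.univ.filter (fun e : Sym2 V => ¬ e.IsDiag),
        w e * x e - w e * y e = if cross e then w e * x e else 0 := by
      intro e _
      by_cases h : cross e <;> simp [hydef, h]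
    rw [Finset.sum_congr rfl h1, ← Finset.sum_filter, Finset.filter_filter]
    apply Finset.sum_congr _ (fun _ _ => rfl)
    apply Finset.filter_congr
    intro e _
    constructor
    · exact fun h => h.2
    · intro hc
      refine ⟨?_, hc⟩
      obtain ⟨p, hp, hp1, hp2⟩ := hc
      rw [hp]
      simp only [Sym2.isDiag_iff_proj_eq]
      intro h
      exact hST hp1 (h ▸ hp2)
  -- the crossing sum equals the double sum over S × T
  have hbij : ∑ e ∈ Finset.univ.filter cross, w e * x e
      = ∑ p ∈ S ×ˢ T, w s(p.1, p.2) * x s(p.1, p.2) := by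
    refine (Finset.sum_bij (fun p _ => s(p.1, p.2)) ?_ ?_ ?_ ?_).symm
    · intro p hp
      simp only [Finset.mem_filter, Finset.mem_univ, true_and]
      obtain ⟨hp1, hp2⟩ := Finset.mem_product.mp hp
      exact ⟨p, rfl, hp1, hp2⟩
    · intro p hp q hq heq
      obtain ⟨hp1, hp2⟩ := Finset.mem_product.mp hp
      obtain ⟨hq1, hq2⟩ := Finset.mem_product.mp hq
      rcases Sym2.eq_iff.mp heq with ⟨h1, h2⟩ | ⟨h1, h2⟩
      · exact Prod.ext h1 h2
      · exact absurd hq2 (hST (h1 ▸ hp1))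
    · intro e he
      simp only [Finset.mem_filter, Finset.mem_univ, true_and] at he
      obtain ⟨p, hp, hp1, hp2⟩ := he
      exact ⟨p, Finset.mem_product.mpr ⟨hp1, hp2⟩, hp.symm ▸ rfl⟩
    · intro p hp; rfl
  -- goal sum equals the product sum
  have hgoal : (∑ i ∈ S, ∑ j ∈ T, if Gx.Adj i j then w s(i, j) else 0)
      = ∑ p ∈ S ×ˢ T, w s(p.1, p.2) * x s(p.1, p.2) := by
    rw [Finset.sum_product]
    refine Finset.sum_congr rfl fun i hi => Finset.sum_congr rfl fun j hj => ?_
    have hij : i ≠ j := fun h => hST hi (h ▸ hj)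
    rcases hx01 s(i, j) with h | h
    · have : ¬ Gx.Adj i j := fun ha => by
        have := ((hGx i j).mp ha).2; rw [h] at this; norm_num at this
      simp [this, h]
    · have : Gx.Adj i j := (hGx i j).mpr ⟨hij, h⟩
      simp [this, h]
  rw [hgoal, ← hbij, ← hdiff]
  linarith
end

section
/- Let x be an (FRP)-feasible 0-1 vector and (S,T) a partition of a connected component C of the graph induced by x. Define x' from x by setting x'_{ij} = 0 for all edges with one endpoint in S and the other in T, and x'_{ij} = x_{ij} otherwise. Then x' is also (FRP)-feasible. -/
open Finset
open scoped Classical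

/-- If `x` is (FRP)-feasible and `(S,T)` is a partition of a connected component
of the graph induced by `x` (the component of some vertex `v`), then the vector
`x'` obtained from `x` by zeroing out all variables on edges between `S` and `T`
is again (FRP)-feasible. -/
theorem zeroing_cut_preserves_frp_feasibility
    {V : Type*} [Fintype V] [DecidableEq V]
    (w : Sym2 V → ℝ) (x : Sym2 V → ℝ)
    (hfeas : FeasFRP w x)
    (Gx : SimpleGraph V)
    (hGx : ∀ i j : V, Gx.Adj i j ↔ (i ≠ j ∧ x s(i, j) = 1))
    (v : V) (S T : Finset V)
    (hS : S.Nonempty) (hT : T.Nonempty) (hdisj : Disjoint S T)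
    (hcomp : ∀ u : V, u ∈ S ∪ T ↔ Gx.Reachable v u)
    (x' : Sym2 V → ℝ)
    (hx' : ∀ e : Sym2 V,
      x' e = if (∃ i ∈ S, ∃ j ∈ T, e = s(i, j)) then 0 else x e) :
    FeasFRP w x' := by
  obtain ⟨h01, hineq⟩ := hfeas
  have h01' : ∀ e : Sym2 V, x' e = 0 ∨ x' e = 1 := by
    intro e
    rw [hx']
    split
    · exact Or.inl rfl
    · exact h01 e
  -- x' e = 1 implies x e = 1 and e is not a cut edge
  have hone : ∀ e : Sym2 V, x' e = 1 →
      x e = 1 ∧ ¬ (∃ i ∈ S, ∃ j ∈ T, e = s(i, j)) := by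
    intro e he
    rw [hx'] at he
    by_cases hc : ∃ i ∈ S, ∃ j ∈ T, e = s(i, j)
    · simp [hc] at he
    · simp [hc] at he; exact ⟨he, hc⟩
  refine ⟨h01', ?_⟩
  intro i j k hij hjk hik hw
  have hnn : ∀ e : Sym2 V, 0 ≤ x e := by
    intro e; rcases h01 e with h | h <;> rw [h] <;> norm_num
  have hnn' : ∀ e : Sym2 V, 0 ≤ x' e := by
    intro e; rcases h01' e with h | h <;> rw [h] <;> norm_num
  have hle1' : ∀ e : Sym2 V, x' e ≤ 1 := by
    intro e; rcases h01' e with h | h <;> rw [h] <;> norm_num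
  by_cases hc : ∃ a ∈ S, ∃ b ∈ T, s(i, k) = s(a, b)
  · -- s(i,k) is a cut edge, so x' s(i,k) = 0; show LHS ≤ 1
    have hik0 : x' s(i, k) = 0 := by rw [hx', if_pos hc]
    rcases h01' s(i, j) with h1 | h1
    · have := hle1' s(j, k); linarith [hnn' s(i, k)]
    rcases h01' s(j, k) with h2 | h2
    · have := hle1' s(i, j); linarith [hnn' s(i, k)]
    -- both 1: contradiction
    exfalso
    obtain ⟨hx1, hnc1⟩ := hone _ h1
    obtain ⟨hx2, hnc2⟩ := hone _ h2
    obtain ⟨a, ha, b, hb, heq⟩ := hc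
    have hcase : (i = a ∧ k = b) ∨ (i = b ∧ k = a) := Sym2.eq_iff.mp heq
    -- so i,k are in S∪T on opposite sides
    have hik' : (i ∈ S ∧ k ∈ T) ∨ (i ∈ T ∧ k ∈ S) := by
      rcases hcase with ⟨hi, hk⟩ | ⟨hi, hk⟩
      · exact Or.inl ⟨hi ▸ ha, hk ▸ hb⟩
      · exact Or.inr ⟨hi ▸ hb, hk ▸ ha⟩
    have hiC : i ∈ S ∪ T := by
      rcases hik' with ⟨h, _⟩ | ⟨h, _⟩
      · exact Finset.mem_union_left _ h
      · exact Finset.mem_union_right _ h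
    have hadj1 : Gx.Adj i j := (hGx i j).mpr ⟨hij, hx1⟩
    have hjC : j ∈ S ∪ T := by
      rw [hcomp]
      exact ((hcomp i).mp hiC).trans hadj1.reachable
    rcases Finset.mem_union.mp hjC with hjS | hjT
    · -- j ∈ S
      rcases hik' with ⟨hiS, hkT⟩ | ⟨hiT, hkS⟩
      · exact hnc2 ⟨j, hjS, k, hkT, rfl⟩
      · exact hnc1 ⟨j, hjS, i, hiT, Sym2.eq_swap⟩
    · -- j ∈ T
      rcases hik' with ⟨hiS, hkT⟩ | ⟨hiT, hkS⟩
      · exact hnc1 ⟨i, hiS, j, hjT, rfl⟩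
      · exact hnc2 ⟨k, hkS, j, hjT, Sym2.eq_swap⟩
  · have hik' : x' s(i, k) = x s(i, k) := by rw [hx', if_neg hc]
    have h1 : x' s(i, j) ≤ x s(i, j) := by
      rw [hx']; split
      · exact hnn _
      · exact le_refl _
    have h2 : x' s(j, k) ≤ x s(j, k) := by
      rw [hx']; split
      · exact hnn _
      · exact le_refl _
    have := hineq i j k hij hjk hik hw
    linarith
end
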